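/- Let d ≥ 1, λ₀ ∈ (0,1], δ := λ₀/200, and λ₁ ∈ [λ₀/2, λ₀]. For all k, ξ, k', ξ' ∈ ℝ^d and all t ∈ [0,∞) one has A(t, k+k', ξ+ξ') ≤ A(t,k,ξ) · A(t,k',ξ') · exp(−(λ₁/4) min(⟨k,ξ⟩, ⟨k',ξ'⟩)^{1/3}), and the same inequality holds with A replaced by A♯ throughout. -/

import Mathlib

noncomputable section
open Real


lemma cube_rpow_third (p : ℝ) (hp : 0 ≤ p) : (p ^ ((1:ℝ)/3)) ^ (3:ℕ) = p := by
  rw [← Real.rpow_natCast (p ^ ((1:ℝ)/3)) 3, ← Real.rpow_mul hp]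
  norm_num

lemma rpow_third_le (p a : ℝ) (hp : 0 ≤ p) (ha : 0 ≤ a) (h : p ≤ a ^ (3:ℕ)) :
    p ^ ((1:ℝ)/3) ≤ a := by
  have := Real.rpow_le_rpow hp h (by norm_num : (0:ℝ) ≤ 1/3)
  rwa [← Real.rpow_natCast a 3, ← Real.rpow_mul ha, (by norm_num : ((3:ℕ):ℝ) * (1/3) = 1),
    Real.rpow_one] at this

lemma third_subadd (p q : ℝ) (hp : 0 ≤ p) (hq : 0 ≤ q) :
    (p + q) ^ ((1:ℝ)/3) ≤ p ^ ((1:ℝ)/3) + q ^ ((1:ℝ)/3) := by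
  have hx : 0 ≤ p ^ ((1:ℝ)/3) := Real.rpow_nonneg hp _
  have hy : 0 ≤ q ^ ((1:ℝ)/3) := Real.rpow_nonneg hq _
  refine rpow_third_le _ _ (by positivity) (by positivity) ?_
  have h1 := cube_rpow_third p hp
  have h2 := cube_rpow_third q hq
  nlinarith [mul_nonneg (mul_nonneg hx hx) hy, mul_nonneg (mul_nonneg hx hy) hy]

lemma third_gain (Y Z : ℝ) (hZ : 0 ≤ Z) (hZY : Z ≤ Y) :
    (Y + Z) ^ ((1:ℝ)/3) ≤ Y ^ ((1:ℝ)/3) + Z ^ ((1:ℝ)/3) / 3 := by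
  have hY : 0 ≤ Y := hZ.trans hZY
  have hx : 0 ≤ Y ^ ((1:ℝ)/3) := Real.rpow_nonneg hY _
  have hy : 0 ≤ Z ^ ((1:ℝ)/3) := Real.rpow_nonneg hZ _
  have hba : Z ^ ((1:ℝ)/3) ≤ Y ^ ((1:ℝ)/3) := Real.rpow_le_rpow hZ hZY (by norm_num)
  refine rpow_third_le _ _ (by positivity) (by positivity) ?_
  have h1 := cube_rpow_third Y hY
  have h2 := cube_rpow_third Z hZ
  nlinarith [mul_nonneg (mul_nonneg hx hx) hy, mul_nonneg (mul_nonneg hx hy) hy,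
    mul_nonneg hy hy, sq_nonneg (Y ^ ((1:ℝ)/3) - Z ^ ((1:ℝ)/3))]


lemma alpha_eq (t w δ : ℝ) (ht : 0 ≤ t) (hw : 0 < w) :
    (1 + t * w⁻¹) ^ (-δ) = (w / (w + t)) ^ δ := by
  have h1 : (1 + t * w⁻¹) = ((w + t) / w) := by field_simp
  have h2 : (0:ℝ) ≤ (w + t) / w := by positivity
  rw [h1, Real.rpow_neg h2, ← Real.inv_rpow h2, inv_div]

lemma alpha_le_one (t w δ : ℝ) (ht : 0 ≤ t) (hw : 0 < w) (hδ : 0 ≤ δ) :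
    (1 + t * w⁻¹) ^ (-δ) ≤ 1 := by
  apply Real.rpow_le_one_of_one_le_of_nonpos
  · nlinarith [mul_nonneg ht (inv_nonneg.2 hw.le)]
  · linarith

lemma alpha_pos (t w δ : ℝ) (ht : 0 ≤ t) (hw : 0 < w) :
    0 < (1 + t * w⁻¹) ^ (-δ) := by
  apply Real.rpow_pos_of_pos; nlinarith [mul_nonneg ht (inv_nonneg.2 hw.le)]

lemma alpha_mono (t u v δ : ℝ) (ht : 0 ≤ t) (hu : 0 < u) (huv : u ≤ v) (hδ : 0 ≤ δ) :
    (1 + t * u⁻¹) ^ (-δ) ≤ (1 + t * v⁻¹) ^ (-δ) := by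
  have hv : 0 < v := hu.trans_le huv
  have h : 1 + t * v⁻¹ ≤ 1 + t * u⁻¹ := by
    have := inv_anti₀ hu huv
    nlinarith
  exact Real.rpow_le_rpow_of_nonpos (by positivity) h (by linarith)

lemma alpha_ratio (t u v δ : ℝ) (ht : 0 ≤ t) (hu : 0 < u) (huv : u ≤ v)
    (hδ : 0 ≤ δ) (hδ2 : δ ≤ 1/2) :
    (1 + t * v⁻¹) ^ (-δ) ≤ (1 + t * u⁻¹) ^ (-δ) * (v ^ ((1:ℝ)/2) / u ^ ((1:ℝ)/2)) := by
  have hv : 0 < v := hu.trans_le huv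
  rw [alpha_eq t v δ ht hv, alpha_eq t u δ ht hu]
  have h1 : (v / (v + t)) ^ δ ≤ (v / (u + t)) ^ δ := by
    apply Real.rpow_le_rpow (by positivity)
    · exact div_le_div_of_nonneg_left hv.le (by positivity) (by linarith)
    · exact hδ
  have h2 : (v / (u + t)) = (u / (u + t)) * (v / u) := by field_simp
  have h3 : (v / (u + t)) ^ δ = (u / (u + t)) ^ δ * (v / u) ^ δ := by
    rw [h2, Real.mul_rpow (by positivity) (by positivity)]
  have h4 : (v / u) ^ δ ≤ (v / u) ^ ((1:ℝ)/2) := by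
    apply Real.rpow_le_rpow_of_exponent_le _ hδ2
    rw [le_div_iff₀ hu]; linarith
  have h5 : (v / u) ^ ((1:ℝ)/2) = v ^ ((1:ℝ)/2) / u ^ ((1:ℝ)/2) :=
    Real.div_rpow hv.le hu.le _
  calc (v / (v + t)) ^ δ ≤ (u / (u + t)) ^ δ * (v / u) ^ δ := by rw [← h3]; exact h1
    _ ≤ (u / (u + t)) ^ δ * (v ^ ((1:ℝ)/2) / u ^ ((1:ℝ)/2)) := by
        apply mul_le_mul_of_nonneg_left _ (by positivity)
        rw [← h5]; exact h4

lemma psiu_lip (t u v δ : ℝ) (ht : 0 ≤ t) (hu : 0 < u) (huv : u ≤ v)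
    (hδ : 0 ≤ δ) (hδ2 : δ ≤ 1/2) :
    (1 + t * v⁻¹) ^ (-δ) * v ^ ((1:ℝ)/2) ≤
      (1 + t * u⁻¹) ^ (-δ) * u ^ ((1:ℝ)/2) + 2 * (v ^ ((1:ℝ)/2) - u ^ ((1:ℝ)/2)) := by
  have hv : 0 < v := hu.trans_le huv
  set au := (1 + t * u⁻¹) ^ (-δ) with hau
  set av := (1 + t * v⁻¹) ^ (-δ) with hav
  have hsu : (0:ℝ) < u ^ ((1:ℝ)/2) := Real.rpow_pos_of_pos hu _
  have hsv : (0:ℝ) < v ^ ((1:ℝ)/2) := Real.rpow_pos_of_pos hv _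
  have hsuv : u ^ ((1:ℝ)/2) ≤ v ^ ((1:ℝ)/2) := Real.rpow_le_rpow hu.le huv (by norm_num)
  have h1 : av ≤ 1 := alpha_le_one t v δ ht hv hδ
  have h0v : 0 < av := alpha_pos t v δ ht hv
  have h0u : 0 < au := alpha_pos t u δ ht hu
  have h1u : au ≤ 1 := alpha_le_one t u δ ht hu hδ
  have hr : av ≤ au * (v ^ ((1:ℝ)/2) / u ^ ((1:ℝ)/2)) := alpha_ratio t u v δ ht hu huv hδ hδ2
  have hr' : av * u ^ ((1:ℝ)/2) ≤ au * v ^ ((1:ℝ)/2) := by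
    have := mul_le_mul_of_nonneg_right hr hsu.le
    calc av * u ^ ((1:ℝ)/2) ≤ au * (v ^ ((1:ℝ)/2) / u ^ ((1:ℝ)/2)) * u ^ ((1:ℝ)/2) := this
      _ = au * v ^ ((1:ℝ)/2) := by field_simp
  nlinarith [mul_le_mul_of_nonneg_right h1 (sub_nonneg.2 hsuv),
    mul_le_mul_of_nonneg_right h1u (sub_nonneg.2 hsuv)]

-- transfer to s-variable
lemma s_exp1 (s : ℝ) (hs : 0 < s) : s ^ (-(2:ℝ)/3) = (s ^ ((2:ℝ)/3))⁻¹ := by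
  rw [show (-(2:ℝ)/3) = -((2:ℝ)/3) by ring, Real.rpow_neg hs.le]

lemma s_exp2 (s : ℝ) (hs : 0 < s) : s ^ ((1:ℝ)/3) = (s ^ ((2:ℝ)/3)) ^ ((1:ℝ)/2) := by
  rw [← Real.rpow_mul hs.le]; norm_num

lemma psi_le (t δ s : ℝ) (ht : 0 ≤ t) (hs : 1 ≤ s) (hδ : 0 ≤ δ) :
    (1 + t * s ^ (-(2:ℝ)/3)) ^ (-δ) * s ^ ((1:ℝ)/3) ≤ s ^ ((1:ℝ)/3) := by
  have hs0 : (0:ℝ) < s := lt_of_lt_of_le one_pos hs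
  have hu : (0:ℝ) < s ^ ((2:ℝ)/3) := Real.rpow_pos_of_pos hs0 _
  rw [s_exp1 s hs0]
  have := alpha_le_one t (s ^ ((2:ℝ)/3)) δ ht hu hδ
  nlinarith [Real.rpow_nonneg hs0.le ((1:ℝ)/3), alpha_pos t (s ^ ((2:ℝ)/3)) δ ht hu,
    mul_le_mul_of_nonneg_right this (Real.rpow_nonneg hs0.le ((1:ℝ)/3))]

lemma psi_nonneg (t δ s : ℝ) (ht : 0 ≤ t) (hs : 1 ≤ s) :
    0 ≤ (1 + t * s ^ (-(2:ℝ)/3)) ^ (-δ) * s ^ ((1:ℝ)/3) := by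
  have hs0 : (0:ℝ) < s := lt_of_lt_of_le one_pos hs
  have hu : (0:ℝ) < s ^ ((2:ℝ)/3) := Real.rpow_pos_of_pos hs0 _
  rw [s_exp1 s hs0]
  exact mul_nonneg (alpha_pos t _ δ ht hu).le (Real.rpow_nonneg hs0.le _)

lemma psi_mono (t δ s s' : ℝ) (ht : 0 ≤ t) (hs : 1 ≤ s) (hss : s ≤ s') (hδ : 0 ≤ δ) :
    (1 + t * s ^ (-(2:ℝ)/3)) ^ (-δ) * s ^ ((1:ℝ)/3) ≤
      (1 + t * s' ^ (-(2:ℝ)/3)) ^ (-δ) * s' ^ ((1:ℝ)/3) := by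
  have hs0 : (0:ℝ) < s := lt_of_lt_of_le one_pos hs
  have hs0' : (0:ℝ) < s' := hs0.trans_le hss
  have hu : (0:ℝ) < s ^ ((2:ℝ)/3) := Real.rpow_pos_of_pos hs0 _
  have huv : s ^ ((2:ℝ)/3) ≤ s' ^ ((2:ℝ)/3) := Real.rpow_le_rpow hs0.le hss (by norm_num)
  rw [s_exp1 s hs0, s_exp1 s' hs0']
  exact mul_le_mul (alpha_mono t _ _ δ ht hu huv hδ)
    (Real.rpow_le_rpow hs0.le hss (by norm_num)) (Real.rpow_nonneg hs0.le _)
    (alpha_pos t _ δ ht (hu.trans_le huv)).le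

lemma psi_lip (t δ s s' : ℝ) (ht : 0 ≤ t) (hs : 1 ≤ s) (hss : s ≤ s')
    (hδ : 0 ≤ δ) (hδ2 : δ ≤ 1/2) :
    (1 + t * s' ^ (-(2:ℝ)/3)) ^ (-δ) * s' ^ ((1:ℝ)/3) ≤
      (1 + t * s ^ (-(2:ℝ)/3)) ^ (-δ) * s ^ ((1:ℝ)/3)
        + 2 * (s' ^ ((1:ℝ)/3) - s ^ ((1:ℝ)/3)) := by
  have hs0 : (0:ℝ) < s := lt_of_lt_of_le one_pos hs
  have hs0' : (0:ℝ) < s' := hs0.trans_le hss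
  have hu : (0:ℝ) < s ^ ((2:ℝ)/3) := Real.rpow_pos_of_pos hs0 _
  have huv : s ^ ((2:ℝ)/3) ≤ s' ^ ((2:ℝ)/3) := Real.rpow_le_rpow hs0.le hss (by norm_num)
  rw [s_exp1 s hs0, s_exp1 s' hs0', s_exp2 s hs0, s_exp2 s' hs0']
  exact psiu_lip t _ _ δ ht hu huv hδ hδ2

lemma core (lam1 δ t X Y Z : ℝ) (hl : 0 < lam1) (hδ0 : 0 < δ) (hδ12 : δ ≤ lam1/12)
    (hδh : δ ≤ 1/2) (ht : 0 ≤ t) (hZ1 : 1 ≤ Z) (hZY : Z ≤ Y) (hX1 : 1 ≤ X)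
    (hXYZ : X ≤ Y + Z) (hYXZ : Y ≤ X + Z) :
    (lam1 * X ^ ((1:ℝ)/3) + δ * (1 + t) ^ (-δ) * X ^ ((1:ℝ)/3) + δ * (1 + t * X ^ (-(2:ℝ)/3)) ^ (-δ) * X ^ ((1:ℝ)/3)
      ≤ (lam1 * Y ^ ((1:ℝ)/3) + δ * (1 + t) ^ (-δ) * Y ^ ((1:ℝ)/3) + δ * (1 + t * Y ^ (-(2:ℝ)/3)) ^ (-δ) * Y ^ ((1:ℝ)/3))
        + (lam1 * Z ^ ((1:ℝ)/3) + δ * (1 + t) ^ (-δ) * Z ^ ((1:ℝ)/3) + δ * (1 + t * Z ^ (-(2:ℝ)/3)) ^ (-δ) * Z ^ ((1:ℝ)/3))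
        - lam1/4 * Z ^ ((1:ℝ)/3))
    ∧ (lam1 * X ^ ((1:ℝ)/3) - δ * (1 + t) ^ (-δ) * X ^ ((1:ℝ)/3) - δ * (1 + t * X ^ (-(2:ℝ)/3)) ^ (-δ) * X ^ ((1:ℝ)/3)
      ≤ (lam1 * Y ^ ((1:ℝ)/3) - δ * (1 + t) ^ (-δ) * Y ^ ((1:ℝ)/3) - δ * (1 + t * Y ^ (-(2:ℝ)/3)) ^ (-δ) * Y ^ ((1:ℝ)/3))
        + (lam1 * Z ^ ((1:ℝ)/3) - δ * (1 + t) ^ (-δ) * Z ^ ((1:ℝ)/3) - δ * (1 + t * Z ^ (-(2:ℝ)/3)) ^ (-δ) * Z ^ ((1:ℝ)/3))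
        - lam1/4 * Z ^ ((1:ℝ)/3)) := by
  have hY1 : 1 ≤ Y := hZ1.trans hZY
  have hX0 : (0:ℝ) < X := lt_of_lt_of_le one_pos hX1
  have hY0 : (0:ℝ) < Y := lt_of_lt_of_le one_pos hY1
  have hZ0 : (0:ℝ) < Z := lt_of_lt_of_le one_pos hZ1
  have hx0 : 0 ≤ X ^ ((1:ℝ)/3) := Real.rpow_nonneg hX0.le _
  have hb0 : 0 ≤ Z ^ ((1:ℝ)/3) := Real.rpow_nonneg hZ0.le _
  have hba : Z ^ ((1:ℝ)/3) ≤ Y ^ ((1:ℝ)/3) := Real.rpow_le_rpow hZ0.le hZY (by norm_num)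
  have f1 : X ^ ((1:ℝ)/3) ≤ Y ^ ((1:ℝ)/3) + Z ^ ((1:ℝ)/3) / 3 :=
    le_trans (Real.rpow_le_rpow hX0.le hXYZ (by norm_num)) (third_gain Y Z hZ0.le hZY)
  have f3 : Y ^ ((1:ℝ)/3) ≤ X ^ ((1:ℝ)/3) + Z ^ ((1:ℝ)/3) :=
    le_trans (Real.rpow_le_rpow hY0.le hYXZ (by norm_num)) (third_subadd X Z hX0.le hZ0.le)
  have f2 : (1 + t * X ^ (-(2:ℝ)/3)) ^ (-δ) * X ^ ((1:ℝ)/3) ≤ (1 + t * Y ^ (-(2:ℝ)/3)) ^ (-δ) * Y ^ ((1:ℝ)/3) + 2/3 * Z ^ ((1:ℝ)/3) := by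
    have h1 := psi_mono t δ X (Y+Z) ht hX1 hXYZ hδ0.le
    have h2 := psi_lip t δ Y (Y+Z) ht hY1 (by linarith) hδ0.le hδh
    have h3 := third_gain Y Z hZ0.le hZY
    linarith
  have f4 : (1 + t * Y ^ (-(2:ℝ)/3)) ^ (-δ) * Y ^ ((1:ℝ)/3) ≤ (1 + t * X ^ (-(2:ℝ)/3)) ^ (-δ) * X ^ ((1:ℝ)/3) + 2 * Z ^ ((1:ℝ)/3) := by
    have h1 := psi_mono t δ Y (X+Z) ht hY1 hYXZ hδ0.le
    have h2 := psi_lip t δ X (X+Z) ht hX1 (by linarith) hδ0.le hδh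
    have h3 := third_subadd X Z hX0.le hZ0.le
    linarith
  have hc2a : (0:ℝ) < (1 + t) ^ (-δ) := Real.rpow_pos_of_pos (by linarith) _
  have hc2b : (1 + t) ^ (-δ) ≤ 1 := Real.rpow_le_one_of_one_le_of_nonpos (by linarith) (by linarith)
  have hpZ0 : 0 ≤ (1 + t * Z ^ (-(2:ℝ)/3)) ^ (-δ) * Z ^ ((1:ℝ)/3) := psi_nonneg t δ Z ht hZ1
  have hpZb : (1 + t * Z ^ (-(2:ℝ)/3)) ^ (-δ) * Z ^ ((1:ℝ)/3) ≤ Z ^ ((1:ℝ)/3) := psi_le t δ Z ht hZ1 hδ0.le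
  constructor
  · linarith [mul_le_mul_of_nonneg_left f1 hl.le,
      mul_le_mul_of_nonneg_left f1 (mul_nonneg hδ0.le hc2a.le),
      mul_le_mul_of_nonneg_left f2 hδ0.le,
      mul_nonneg hδ0.le hpZ0,
      mul_le_mul_of_nonneg_right hδ12 hb0,
      mul_nonneg (mul_nonneg hδ0.le hc2a.le) hb0, mul_nonneg hl.le hb0]
  · linarith [mul_le_mul_of_nonneg_left f1 hl.le,
      mul_le_mul_of_nonneg_left (show Y ^ ((1:ℝ)/3) - Z ^ ((1:ℝ)/3) ≤ X ^ ((1:ℝ)/3) by linarith) (mul_nonneg hδ0.le hc2a.le),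
      mul_le_mul_of_nonneg_left (show (1 + t * Y ^ (-(2:ℝ)/3)) ^ (-δ) * Y ^ ((1:ℝ)/3) - 2*Z ^ ((1:ℝ)/3) ≤ (1 + t * X ^ (-(2:ℝ)/3)) ^ (-δ) * X ^ ((1:ℝ)/3) by linarith) hδ0.le,
      mul_le_mul_of_nonneg_left hpZb hδ0.le,
      mul_le_mul_of_nonneg_right hδ12 hb0,
      mul_le_mul_of_nonneg_right (mul_le_mul_of_nonneg_left hc2b hδ0.le) hb0, mul_nonneg hl.le hb0]


noncomputable section

/-- Japanese bracket `⟨r⟩ = (1+r²)^(1/2)`. -/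
def jap (r : ℝ) : ℝ := Real.sqrt (1 + r ^ 2)

/-- The weight exponent `λ(t,r)`. -/
def lamW (lam1 δ t r : ℝ) : ℝ :=
  lam1 * jap r ^ ((1:ℝ)/3) + δ * (1 + t) ^ (-δ) * jap r ^ ((1:ℝ)/3)
    + δ * (1 + t * jap r ^ (-(2:ℝ)/3)) ^ (-δ) * jap r ^ ((1:ℝ)/3)

/-- The weight exponent `λ♯(t,r)`. -/
def lamSharpW (lam1 δ t r : ℝ) : ℝ :=
  lam1 * jap r ^ ((1:ℝ)/3) - δ * (1 + t) ^ (-δ) * jap r ^ ((1:ℝ)/3)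
    - δ * (1 + t * jap r ^ (-(2:ℝ)/3)) ^ (-δ) * jap r ^ ((1:ℝ)/3)

/-- `⟨k,ξ⟩ = (1+|k|²+|ξ|²)^(1/2)`. -/
def brk2 {d : ℕ} (k ξ : EuclideanSpace ℝ (Fin d)) : ℝ := Real.sqrt (1 + ‖k‖ ^ 2 + ‖ξ‖ ^ 2)

/-- `|(k,ξ)|`, the Euclidean norm of `(k,ξ) ∈ ℝ^{2d}`. -/
def nrm2 {d : ℕ} (k ξ : EuclideanSpace ℝ (Fin d)) : ℝ := Real.sqrt (‖k‖ ^ 2 + ‖ξ‖ ^ 2)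

/-- The weight `A(t,k,ξ) = exp(λ(t,|(k,ξ)|))`. -/
def Aw {d : ℕ} (lam1 δ t : ℝ) (k ξ : EuclideanSpace ℝ (Fin d)) : ℝ :=
  Real.exp (lamW lam1 δ t (nrm2 k ξ))

/-- The weight `A♯(t,k,ξ) = exp(λ♯(t,|(k,ξ)|))`. -/
def AwSharp {d : ℕ} (lam1 δ t : ℝ) (k ξ : EuclideanSpace ℝ (Fin d)) : ℝ :=
  Real.exp (lamSharpW lam1 δ t (nrm2 k ξ))


lemma jap_one_le (r : ℝ) : 1 ≤ jap r := by
  have h : Real.sqrt 1 ≤ Real.sqrt (1 + r ^ 2) := Real.sqrt_le_sqrt (by nlinarith [sq_nonneg r])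
  rw [jap]; simpa using h

lemma jap_mono {a b : ℝ} (ha : 0 ≤ a) (hab : a ≤ b) : jap a ≤ jap b :=
  Real.sqrt_le_sqrt (by nlinarith)

lemma le_jap (r : ℝ) (h : 0 ≤ r) : r ≤ jap r := by
  have h2 : Real.sqrt (r ^ 2) ≤ Real.sqrt (1 + r ^ 2) := Real.sqrt_le_sqrt (by nlinarith)
  rw [jap]; rwa [Real.sqrt_sq h] at h2

lemma jap_add_le (a b : ℝ) (ha : 0 ≤ a) (hb : 0 ≤ b) : jap (a + b) ≤ jap a + b := by
  have h1 : a ≤ jap a := le_jap a ha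
  have h0 : 0 ≤ jap a := le_trans ha h1
  have hs : (jap a) ^ 2 = 1 + a ^ 2 := Real.sq_sqrt (by positivity)
  have key : 1 + (a + b) ^ 2 ≤ (jap a + b) ^ 2 := by nlinarith
  calc jap (a+b) = Real.sqrt (1 + (a+b)^2) := rfl
    _ ≤ Real.sqrt ((jap a + b)^2) := Real.sqrt_le_sqrt key
    _ = jap a + b := Real.sqrt_sq (by positivity)

lemma sqrt2_tri (a b c d : ℝ) (ha : 0 ≤ a) (hb : 0 ≤ b) (hc : 0 ≤ c) (hd : 0 ≤ d) :
    Real.sqrt ((a+c)^2 + (b+d)^2) ≤ Real.sqrt (a^2+b^2) + Real.sqrt (c^2+d^2) := by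
  have hS1 : (Real.sqrt (a^2+b^2)) ^ 2 = a^2+b^2 := Real.sq_sqrt (by positivity)
  have hS2 : (Real.sqrt (c^2+d^2)) ^ 2 = c^2+d^2 := Real.sq_sqrt (by positivity)
  have hS10 : 0 ≤ Real.sqrt (a^2+b^2) := Real.sqrt_nonneg _
  have hS20 : 0 ≤ Real.sqrt (c^2+d^2) := Real.sqrt_nonneg _
  have h2 : (a*c+b*d)^2 ≤ (Real.sqrt (a^2+b^2) * Real.sqrt (c^2+d^2))^2 := by
    rw [mul_pow, hS1, hS2]; nlinarith [sq_nonneg (a*d - b*c)]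
  have hcs : a*c+b*d ≤ Real.sqrt (a^2+b^2) * Real.sqrt (c^2+d^2) := by
    nlinarith [mul_nonneg hS10 hS20, mul_nonneg (mul_nonneg ha hc) (mul_nonneg hb hd)]
  have key : (a+c)^2 + (b+d)^2 ≤ (Real.sqrt (a^2+b^2) + Real.sqrt (c^2+d^2))^2 := by
    nlinarith
  calc Real.sqrt ((a+c)^2 + (b+d)^2)
      ≤ Real.sqrt ((Real.sqrt (a^2+b^2) + Real.sqrt (c^2+d^2))^2) := Real.sqrt_le_sqrt key
    _ = _ := Real.sqrt_sq (by positivity)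

lemma nrm2_nonneg {d : ℕ} (k ξ : EuclideanSpace ℝ (Fin d)) : 0 ≤ nrm2 k ξ :=
  Real.sqrt_nonneg _

lemma nrm2_neg {d : ℕ} (k ξ : EuclideanSpace ℝ (Fin d)) : nrm2 (-k) (-ξ) = nrm2 k ξ := by
  simp [nrm2]

lemma nrm2_tri {d : ℕ} (k ξ k' ξ' : EuclideanSpace ℝ (Fin d)) :
    nrm2 (k + k') (ξ + ξ') ≤ nrm2 k ξ + nrm2 k' ξ' := by
  have h1 : Real.sqrt (‖k+k'‖^2 + ‖ξ+ξ'‖^2) ≤ Real.sqrt ((‖k‖+‖k'‖)^2 + (‖ξ‖+‖ξ'‖)^2) := by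
    apply Real.sqrt_le_sqrt
    have e1 := norm_add_le k k'
    have e2 := norm_add_le ξ ξ'
    nlinarith [norm_nonneg (k+k'), norm_nonneg (ξ+ξ'), norm_nonneg k, norm_nonneg k',
      norm_nonneg ξ, norm_nonneg ξ']
  calc nrm2 (k+k') (ξ+ξ') ≤ Real.sqrt ((‖k‖+‖k'‖)^2 + (‖ξ‖+‖ξ'‖)^2) := h1
    _ ≤ _ := sqrt2_tri ‖k‖ ‖ξ‖ ‖k'‖ ‖ξ'‖ (norm_nonneg _) (norm_nonneg _)
        (norm_nonneg _) (norm_nonneg _)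

lemma brk2_eq {d : ℕ} (k ξ : EuclideanSpace ℝ (Fin d)) : brk2 k ξ = jap (nrm2 k ξ) := by
  rw [brk2, jap, nrm2, Real.sq_sqrt (by positivity), add_assoc]

lemma main_ineq (lam1 δ t n n1 n2 : ℝ) (hl : 0 < lam1) (hδ0 : 0 < δ) (hδ12 : δ ≤ lam1/12)
    (hδh : δ ≤ 1/2) (ht : 0 ≤ t) (hn2 : 0 ≤ n2) (hn1 : 0 ≤ n1) (h21 : n2 ≤ n1)
    (hn : 0 ≤ n) (htri : n ≤ n1 + n2) (htri2 : n1 ≤ n + n2) :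
    lamW lam1 δ t n ≤ lamW lam1 δ t n1 + lamW lam1 δ t n2 - lam1/4 * jap n2 ^ ((1:ℝ)/3)
    ∧ lamSharpW lam1 δ t n ≤ lamSharpW lam1 δ t n1 + lamSharpW lam1 δ t n2
        - lam1/4 * jap n2 ^ ((1:ℝ)/3) := by
  have hXYZ : jap n ≤ jap n1 + jap n2 :=
    le_trans (jap_mono hn htri) (le_trans (jap_add_le n1 n2 hn1 hn2)
      (by linarith [le_jap n2 hn2]))
  have hYXZ : jap n1 ≤ jap n + jap n2 :=
    le_trans (jap_mono hn1 htri2) (le_trans (jap_add_le n n2 hn hn2)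
      (by linarith [le_jap n2 hn2]))
  have hZY : jap n2 ≤ jap n1 := jap_mono hn2 h21
  have h := core lam1 δ t (jap n) (jap n1) (jap n2) hl hδ0 hδ12 hδh ht
    (jap_one_le n2) hZY (jap_one_le n) hXYZ hYXZ
  exact ⟨h.1, h.2⟩

theorem stmt4 (d : ℕ) (hd : 1 ≤ d) (lam0 lam1 : ℝ)
    (h0 : 0 < lam0) (h1 : lam0 ≤ 1)
    (hl1 : lam0 / 2 ≤ lam1) (hl2 : lam1 ≤ lam0)
    (t : ℝ) (ht : 0 ≤ t) (k ξ k' ξ' : EuclideanSpace ℝ (Fin d)) :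
    Aw lam1 (lam0 / 200) t (k + k') (ξ + ξ') ≤
      Aw lam1 (lam0 / 200) t k ξ * Aw lam1 (lam0 / 200) t k' ξ' *
        Real.exp (-(lam1 / 4) * min (brk2 k ξ) (brk2 k' ξ') ^ ((1:ℝ)/3)) ∧
    AwSharp lam1 (lam0 / 200) t (k + k') (ξ + ξ') ≤
      AwSharp lam1 (lam0 / 200) t k ξ * AwSharp lam1 (lam0 / 200) t k' ξ' *
        Real.exp (-(lam1 / 4) * min (brk2 k ξ) (brk2 k' ξ') ^ ((1:ℝ)/3)) := by
  have hl : 0 < lam1 := by linarith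
  have hδ0 : 0 < lam0 / 200 := by linarith
  have hδ12 : lam0 / 200 ≤ lam1 / 12 := by linarith
  have hδh : lam0 / 200 ≤ 1/2 := by linarith
  set n := nrm2 (k + k') (ξ + ξ') with hn_def
  set n1 := nrm2 k ξ with hn1_def
  set n2 := nrm2 k' ξ' with hn2_def
  have hn : 0 ≤ n := nrm2_nonneg _ _
  have hn1 : 0 ≤ n1 := nrm2_nonneg _ _
  have hn2 : 0 ≤ n2 := nrm2_nonneg _ _
  have htri : n ≤ n1 + n2 := nrm2_tri k ξ k' ξ'
  have htriA : n1 ≤ n + n2 := by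
    have h := nrm2_tri (k + k') (ξ + ξ') (-k') (-ξ')
    have e1 : k + k' + -k' = k := by abel
    have e2 : ξ + ξ' + -ξ' = ξ := by abel
    rw [e1, e2, nrm2_neg] at h
    exact h
  have htriB : n2 ≤ n + n1 := by
    have h := nrm2_tri (k + k') (ξ + ξ') (-k) (-ξ)
    have e1 : k + k' + -k = k' := by abel
    have e2 : ξ + ξ' + -ξ = ξ' := by abel
    rw [e1, e2, nrm2_neg] at h
    exact h
  rcases le_total n2 n1 with hc | hc
  · have hmin : min (brk2 k ξ) (brk2 k' ξ') = jap n2 := by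
      rw [min_eq_right, brk2_eq]
      rw [brk2_eq, brk2_eq]
      exact jap_mono hn2 hc
    obtain ⟨m1, m2⟩ := main_ineq lam1 (lam0/200) t n n1 n2 hl hδ0 hδ12 hδh ht hn2 hn1 hc hn
      htri htriA
    rw [hmin]
    constructor
    · simp only [Aw, ← Real.exp_add]
      exact Real.exp_le_exp.mpr (by linarith)
    · simp only [AwSharp, ← Real.exp_add]
      exact Real.exp_le_exp.mpr (by linarith)
  · have hmin : min (brk2 k ξ) (brk2 k' ξ') = jap n1 := by
      rw [min_eq_left, brk2_eq]
      rw [brk2_eq, brk2_eq]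
      exact jap_mono hn1 hc
    obtain ⟨m1, m2⟩ := main_ineq lam1 (lam0/200) t n n2 n1 hl hδ0 hδ12 hδh ht hn1 hn2 hc hn
      (by linarith) (by linarith)
    rw [hmin]
    constructor
    · simp only [Aw, ← Real.exp_add]
      exact Real.exp_le_exp.mpr (by linarith)
    · simp only [AwSharp, ← Real.exp_add]
      exact Real.exp_le_exp.mpr (by linarith)
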